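/- Let s be a macrostate for the partition Π_V and let s' be the macrostate obtained from s by decreasing the count of vertex-state A in cell V_q by one and increasing the count of vertex-state B in cell V_q by one, where A ≠ B (so a transition from s to s' corresponds to a vertex in V_q changing from vertex-state A to vertex-state B). Then Σ_{S∈cell(s)} Σ_{S'∈cell(s')} Q_{S,S'} = Σ_{v∈V_q} Σ_{n} R_{A,B}( Σ_{p=1}^P n_{1,p}, …, Σ_{p=1}^P n_{M,p} ) · ∏_{p=1}^P A( s_p − δ_{p,q} e_A , n_p ), where the inner sum is over all neighbourhood counts n for v (matrices n ∈ ℤ_{≥0}^{M×P} with Σ_m n_{m,p} = d^v_p for every p), s_p denotes the p-th column of s, and δ is the Kronecker delta. -/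

import Mathlib

open Finset

/-- The set of vertices in partition cell `p`. -/
def cellVerts {V : Type} [Fintype V] {P : ℕ} (part : V → Fin P) (p : Fin P) : Finset V :=
  Finset.univ.filter (fun v => part v = p)

/-- N_p, the number of vertices in partition cell `p`. -/
def Ncell {V : Type} [Fintype V] {P : ℕ} (part : V → Fin P) (p : Fin P) : ℕ :=
  (cellVerts part p).card

/-- d^v_p, the number of neighbours of `v` in partition cell `p`. -/
def dOf {V : Type} [Fintype V] [DecidableEq V] {P : ℕ} (G : SimpleGraph V)
    [DecidableRel G.Adj] (part : V → Fin P) (v : V) (p : Fin P) : ℕ :=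
  ((G.neighborFinset v).filter (fun u => part u = p)).card

/-- The lumping cell of a macrostate `s`: the microstates `S : V → Fin M` such that, for
every vertex-state `m` and cell `p`, the number of vertices `v ∈ V_p` with `S v = m` is
`s m p`. -/
def lumpCell {V : Type} [Fintype V] [DecidableEq V] {M P : ℕ} (part : V → Fin P)
    (s : Fin M → Fin P → ℕ) : Finset (V → Fin M) :=
  Finset.univ.filter (fun S => ∀ m p,
    (Finset.univ.filter (fun v => part v = p ∧ S v = m)).card = s m p)

/-- Number of neighbours of `v` whose state under `S` is `m`. -/
def nbr {V : Type} [Fintype V] [DecidableEq V] {M : ℕ} (G : SimpleGraph V)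
    [DecidableRel G.Adj] (S : V → Fin M) (v : V) (m : Fin M) : ℕ :=
  ((G.neighborFinset v).filter (fun u => S u = m)).card

/-- The affine transition rate R_{A,B}(n₁,…,n_M) = ζ₀^{A,B} + Σₘ ζₘ^{A,B} nₘ. -/
def rate {M : ℕ} (ζ0 : Fin M → Fin M → ℝ) (ζ : Fin M → Fin M → Fin M → ℝ)
    (A B : Fin M) (nc : Fin M → ℕ) : ℝ :=
  ζ0 A B + ∑ m, ζ A B m * (nc m : ℝ)

/-- The infinitesimal generator `Q` of the single-vertex-transition Markov chain:
`Q S S'` is the affine rate `R_{S(v),S'(v)}` evaluated at the neighbourhood counts of the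
unique differing vertex `v` when `S, S'` differ at exactly one vertex, and `0` otherwise. -/
def Qmat {V : Type} [Fintype V] [DecidableEq V] {M : ℕ} (G : SimpleGraph V)
    [DecidableRel G.Adj] (ζ0 : Fin M → Fin M → ℝ) (ζ : Fin M → Fin M → Fin M → ℝ)
    (S S' : V → Fin M) : ℝ :=
  if (Finset.univ.filter (fun v => S v ≠ S' v)).card = 1 then
    ∑ v ∈ Finset.univ.filter (fun v => S v ≠ S' v),
      rate ζ0 ζ (S v) (S' v) (nbr G S v)
  else 0

/-- Multinomial coefficient C(t; a) for integer arguments: t!/(∏ₘ aₘ!) when all aₘ ≥ 0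
and Σₘ aₘ = t, and 0 otherwise. -/
def multinomZ {M : ℕ} (t : ℤ) (a : Fin M → ℤ) : ℕ :=
  if (∀ m, 0 ≤ a m) ∧ (∑ m, a m) = t then
    Nat.multinomial Finset.univ (fun m => (a m).toNat) else 0

/-- A(sp, np) = C(Σₘ npₘ; np) · C(Σₘ spₘ − Σₘ npₘ; sp − np). -/
def Afun {M : ℕ} (sp np : Fin M → ℤ) : ℕ :=
  multinomZ (∑ m, np m) np *
    multinomZ ((∑ m, sp m) - ∑ m, np m) (fun m => sp m - np m)

/-! Summing `Q_{S,S'}` over `S' ∈ cell(s')` picks out exactly the single-vertex updates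
`S[v ↦ B]` with `v ∈ V_q` and `S v = A`, so the left side is
`Σ_{v ∈ V_q} Σ_{S ∈ cell(s), S v = A} R_{A,B}(counts of the neighbours of v)`.
The rate depends on `S` only through the matrix `n` of neighbour counts of `v` per cell and
state. For fixed `v` and `n`, split `V` into the blocks `{v}`, `N(v) ∩ V_p` and
`V_p \ ({v} ∪ N(v))`: a microstate is counted iff it has prescribed state counts on every
block, and the number of colourings of a block with prescribed counts is a multinomial
coefficient (the coefficient of `X^a` in `(Σ_m X_m)^|block|`). The product of these is
`∏_p A(s_p − δ_{p,q} e_A, n_p)`. -/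

open MvPolynomial in
theorem card_filter_card_fiber_eq_multinomial {T σ : Type*} [Fintype T] [DecidableEq T]
    [Fintype σ] [DecidableEq σ] (d : σ → ℕ) :
    #{g : T → σ | ∀ m, #{x | g x = m} = d m}
      = if ∑ m, d m = Fintype.card T then Nat.multinomial univ d else 0 := by
  let fiberCard (g : T → σ) : σ →₀ ℕ :=
    Finsupp.equivFunOnFinite.symm fun m => #{x | g x = m}
  have hmono (g : T → σ) :
      ∏ x, (X (g x) : MvPolynomial σ ℕ) = monomial (fiberCard g) 1 := by
    rw [monomial_eq, C_1, one_mul, Finsupp.prod_fintype _ _ (by simp), ← prod_fiberwise univ g]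
    refine prod_congr rfl fun m _ => ?_
    rw [prod_congr rfl fun x hx => by rw [(mem_filter.mp hx).2], prod_const]
    rfl
  have hexp : (∑ m, X m : MvPolynomial σ ℕ) ^ Fintype.card T
      = ∑ g : T → σ, monomial (fiberCard g) 1 := by
    rw [← card_univ, ← prod_const, prod_univ_sum]
    simp only [Fintype.piFinset_univ, hmono]
  have h := coeff_sum_X_pow_of_fintype (R := ℕ) (Finsupp.equivFunOnFinite.symm d)
    (Fintype.card T)
  rw [Nat.cast_id, hexp, coeff_sum, Finsupp.sum_fintype _ _ fun _ => rfl,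
    ← Finsupp.multinomial_of_support_subset (subset_univ _)] at h
  simpa only [coeff_monomial, sum_boole, Nat.cast_id, Finsupp.ext_iff, fiberCard,
    Finsupp.equivFunOnFinite_symm_apply_apply, Finsupp.coe_equivFunOnFinite_symm] using h

theorem card_filter_card_fiber_eq_multinomZ {T : Type*} [Fintype T] [DecidableEq T] {M : ℕ}
    (a : Fin M → ℤ) :
    #{g : T → Fin M | ∀ m, (#{x | g x = m} : ℤ) = a m} = multinomZ (Fintype.card T) a := by
  unfold multinomZ
  by_cases ha : ∀ m, 0 ≤ a m
  · have hsum : (∑ m, a m = Fintype.card T) ↔ ∑ m, (a m).toNat = Fintype.card T := by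
      rw [← Nat.cast_inj (R := ℤ), Nat.cast_sum]
      simp only [Int.toNat_of_nonneg (ha _)]
    rw [if_congr ((and_iff_right ha).trans hsum) rfl rfl, ← card_filter_card_fiber_eq_multinomial]
    congr 1
    ext g
    simp only [mem_filter, mem_univ, true_and]
    exact forall_congr' fun m => by have := ha m; omega
  · rw [if_neg (fun h => ha h.1), card_eq_zero, filter_eq_empty_iff]
    intro g _ hg
    exact ha fun m => hg m ▸ Int.natCast_nonneg _

theorem multinomZ_indicator {M P : ℕ} (A : Fin M) (p q : Fin P) :
    multinomZ (if p = q then 1 else 0) (fun m => if p = q ∧ m = A then 1 else 0) = 1 := by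
  by_cases hpq : p = q
  · have hsingle : (fun m : Fin M => ((if m = A then 1 else 0 : ℤ)).toNat) = Pi.single A 1 := by
      ext m
      by_cases hm : m = A <;> simp [hm]
    simp only [multinomZ, hpq, true_and, if_true, sum_ite_eq', mem_univ, hsingle,
      Nat.multinomial_single]
    exact if_pos ⟨fun m => by split_ifs <;> norm_num, trivial⟩
  · simp [multinomZ, hpq, Nat.multinomial]

theorem card_filter_card_block_fiber_eq_prod {V I : Type*} [Fintype V] [DecidableEq V]
    [Fintype I] [DecidableEq I] {M : ℕ} (β : V → I) (c : I → Fin M → ℤ) :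
    #{S : V → Fin M | ∀ i m, (#{u | β u = i ∧ S u = m} : ℤ) = c i m}
      = ∏ i, multinomZ #{u | β u = i} (c i) := by
  have hblock (i : I) : multinomZ #{u | β u = i} (c i)
      = #{g : {u // β u = i} → Fin M | ∀ m, (#{x | g x = m} : ℤ) = c i m} := by
    rw [← Fintype.card_subtype, card_filter_card_fiber_eq_multinomZ]
  rw [prod_congr rfl fun i _ => hblock i, ← Fintype.card_piFinset]
  let e : (V → Fin M) ≃ ∀ i, {u // β u = i} → Fin M :=
    ((Equiv.sigmaFiberEquiv β).arrowCongr (Equiv.refl (Fin M))).symm.trans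
      (Equiv.piCurry fun _ _ => Fin M)
  refine card_equiv e fun S => ?_
  simp only [mem_filter, mem_univ, true_and, Fintype.mem_piFinset]
  refine forall_congr' fun i => forall_congr' fun m => ?_
  rw [← Fintype.card_subtype, ← Fintype.card_subtype,
    ← Fintype.card_congr (Equiv.subtypeSubtypeEquivSubtypeInter _ _)]
  rfl

theorem card_filter_update_sub {V κ : Type*} [Fintype V] [DecidableEq V] (S : V → κ) (v : V)
    (b : κ) (r : V → κ → Prop) [∀ u k, Decidable (r u k)] :
    (#{u | r u (Function.update S v b u)} : ℤ) - #{u | r u (S u)}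
      = (if r v b then 1 else 0) - if r v (S v) then 1 else 0 := by
  simp only [card_filter, Nat.cast_sum, ← sum_sub_distrib]
  rw [sum_eq_single v (fun u _ hu => by simp [Function.update_of_ne hu]) (by simp)]
  simp

section Transitions

variable {V : Type} [Fintype V] [DecidableEq V] {M P : ℕ}

theorem mem_lumpCell {part : V → Fin P} {s : Fin M → Fin P → ℕ} {S : V → Fin M} :
    S ∈ lumpCell part s ↔ ∀ m p, #{v | part v = p ∧ S v = m} = s m p := by
  simp [lumpCell]

def IsLumpedTransition (s s' : Fin M → Fin P → ℕ) (A B : Fin M) (q : Fin P) : Prop :=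
  ∀ m p, (s' m p : ℤ) =
    (s m p : ℤ) - (if m = A ∧ p = q then 1 else 0) + (if m = B ∧ p = q then 1 else 0)

variable {part : V → Fin P} {s s' : Fin M → Fin P → ℕ} {A B : Fin M} {q : Fin P}

theorem update_mem_lumpCell_iff
    (hs' : IsLumpedTransition s s' A B q)
    {S : V → Fin M} (hS : S ∈ lumpCell part s) {v : V} {b : Fin M} (hb : S v ≠ b) :
    Function.update S v b ∈ lumpCell part s' ↔ part v = q ∧ S v = A ∧ b = B := by
  rw [mem_lumpCell] at hS ⊢
  have hflip (x : Fin M) (m p) : (part v = p ∧ x = m) ↔ (m = x ∧ p = part v) :=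
    ⟨fun ⟨h1, h2⟩ => ⟨h2.symm, h1.symm⟩, fun ⟨h1, h2⟩ => ⟨h2.symm, h1.symm⟩⟩
  have hcount (m p) : (#{u | part u = p ∧ Function.update S v b u = m} : ℤ)
      = s m p - (if m = S v ∧ p = part v then 1 else 0)
        + if m = b ∧ p = part v then 1 else 0 := by
    have h := card_filter_update_sub S v b (fun u k => part u = p ∧ k = m)
    rw [hS, if_congr (hflip _ m p) rfl rfl, if_congr (hflip _ m p) rfl rfl] at h
    omega
  constructor
  · intro h
    have h1 := hcount (S v) (part v)
    have h2 := hcount b (part v)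
    rw [h, hs'] at h1 h2
    simp only [hb, hb.symm, and_true, if_true, if_false] at h1 h2
    have hA : S v = A ∧ part v = q := by
      by_contra hc
      rw [if_neg hc] at h1
      split_ifs at h1 <;> omega
    have hB : b = B := by
      by_contra hc
      rw [if_neg (show ¬(b = B ∧ part v = q) from fun h => hc h.1)] at h2
      split_ifs at h2 <;> omega
    exact ⟨hA.2, hA.1, hB⟩
  · rintro ⟨rfl, hSv, rfl⟩ m p
    zify
    rw [hcount, hs', hSv]

variable (G : SimpleGraph V) [DecidableRel G.Adj] (ζ0 : Fin M → Fin M → ℝ)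
  (ζ : Fin M → Fin M → Fin M → ℝ)

theorem Qmat_update {S : V → Fin M} {v : V} {b : Fin M} (hb : S v ≠ b) :
    Qmat G ζ0 ζ S (Function.update S v b) = rate ζ0 ζ (S v) b (nbr G S v) := by
  have hdiff : ({u | S u ≠ Function.update S v b u} : Finset V) = {v} := by
    ext u
    by_cases hu : u = v
    · simp [hu, hb]
    · simp [hu]
  simp [Qmat, hdiff]

theorem exists_eq_update_of_Qmat_ne_zero {S S' : V → Fin M} (h : Qmat G ζ0 ζ S S' ≠ 0) :
    ∃ v, S v ≠ S' v ∧ S' = Function.update S v (S' v) := by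
  unfold Qmat at h
  split_ifs at h with hcard
  · obtain ⟨v, hv⟩ := card_eq_one.mp hcard
    have hagree (u) (hu : u ≠ v) : S u = S' u := by
      by_contra hne
      exact hu (mem_singleton.mp (hv ▸ mem_filter.mpr ⟨mem_univ u, hne⟩))
    have hv' : v ∈ ({u | S u ≠ S' u} : Finset V) := hv ▸ mem_singleton_self v
    refine ⟨v, (mem_filter.mp hv').2, funext fun u => ?_⟩
    by_cases hu : u = v
    · simp [hu]
    · simp [hu, hagree u hu]
  · exact absurd rfl h

theorem sum_lumpCell_Qmat
    (hs' : IsLumpedTransition s s' A B q)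
    (hAB : A ≠ B) {S : V → Fin M} (hS : S ∈ lumpCell part s) :
    ∑ S' ∈ lumpCell part s', Qmat G ζ0 ζ S S'
      = ∑ v ∈ cellVerts part q with S v = A, rate ζ0 ζ A B (nbr G S v) := by
  symm
  refine sum_bij_ne_zero (fun v _ _ => Function.update S v B) ?_ ?_ ?_ ?_
  · intro v hv _
    simp only [cellVerts, mem_filter, mem_univ, true_and] at hv
    exact (update_mem_lumpCell_iff hs' hS (hv.2 ▸ hAB)).mpr ⟨hv.1, hv.2, rfl⟩
  · intro v hv _ w _ _ hvw
    by_contra hne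
    have := congrFun hvw v
    simp only [cellVerts, mem_filter, mem_univ, true_and] at hv
    rw [Function.update_self, Function.update_of_ne hne, hv.2] at this
    exact hAB this.symm
  · intro S' hS' hQ
    obtain ⟨v, hne, hS'eq⟩ := exists_eq_update_of_Qmat_ne_zero G ζ0 ζ hQ
    generalize S' v = b at hne hS'eq
    subst hS'eq
    obtain ⟨hpv, hSv, hB⟩ := (update_mem_lumpCell_iff hs' hS hne).mp hS'
    refine ⟨v, by simp [cellVerts, hpv, hSv], ?_, by rw [hB]⟩
    rw [Qmat_update G ζ0 ζ hne, hSv, hB] at hQ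
    exact hQ
  · intro v hv _
    simp only [cellVerts, mem_filter, mem_univ, true_and] at hv
    rw [Qmat_update G ζ0 ζ (hv.2 ▸ hAB), hv.2]

theorem sum_lumpCell_sum_lumpCell_Qmat
    (hs' : IsLumpedTransition s s' A B q)
    (hAB : A ≠ B) :
    ∑ S ∈ lumpCell part s, ∑ S' ∈ lumpCell part s', Qmat G ζ0 ζ S S'
      = ∑ v ∈ cellVerts part q, ∑ S ∈ lumpCell part s with S v = A,
          rate ζ0 ζ A B (nbr G S v) := by
  rw [sum_congr rfl fun S hS => sum_lumpCell_Qmat G ζ0 ζ hs' hAB hS]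
  simp only [sum_filter]
  exact sum_comm

end Transitions

section Neighbourhoods

variable {V : Type} [Fintype V] [DecidableEq V] (G : SimpleGraph V) [DecidableRel G.Adj]
  {M P : ℕ} (part : V → Fin P)

def nbrCount (S : V → Fin M) (v : V) (p : Fin P) (m : Fin M) : ℕ :=
  #{u ∈ G.neighborFinset v | part u = p ∧ S u = m}

theorem sum_nbrCount_eq_dOf (S : V → Fin M) (v : V) (p : Fin P) :
    ∑ m, nbrCount G part S v p m = dOf G part v p := by
  rw [dOf, card_eq_sum_card_fiberwise (f := S) (t := univ) fun _ _ => mem_coe.mpr (mem_univ _)]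
  simp only [nbrCount, filter_filter]

theorem nbr_eq_sum_nbrCount (S : V → Fin M) (v : V) (m : Fin M) :
    nbr G S v m = ∑ p, nbrCount G part S v p m := by
  rw [nbr, card_eq_sum_card_fiberwise (f := part) (t := univ)
    fun _ _ => mem_coe.mpr (mem_univ _)]
  simp only [nbrCount, filter_filter, and_comm]

theorem sum_rate_nbr_eq_sum_nbrCount (ζ0 : Fin M → Fin M → ℝ)
    (ζ : Fin M → Fin M → Fin M → ℝ) (A B : Fin M) (v : V) (X : Finset (V → Fin M)) :
    ∑ S ∈ X, rate ζ0 ζ A B (nbr G S v)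
      = ∑ n ∈ Fintype.piFinset fun p => Nat.antidiagonalTuple M (dOf G part v p),
          rate ζ0 ζ A B (fun m => ∑ p, n p m) * #{S ∈ X | nbrCount G part S v = n} := by
  rw [← sum_fiberwise_of_maps_to (g := fun S => nbrCount G part S v) fun S _ => ?_]
  · refine sum_congr rfl fun n _ => ?_
    rw [mul_comm, ← nsmul_eq_mul, ← sum_const]
    refine sum_congr rfl fun S hS => ?_
    rw [← (mem_filter.mp hS).2]
    congr 1
    exact funext (nbr_eq_sum_nbrCount G part S v)
  · rw [Fintype.mem_piFinset]
    exact fun p => Nat.mem_antidiagonalTuple.mpr (sum_nbrCount_eq_dOf G part S v p)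

end Neighbourhoods

section Blocks

variable {V : Type} [Fintype V] [DecidableEq V] (G : SimpleGraph V) [DecidableRel G.Adj]
  {M P : ℕ} (part : V → Fin P) (v : V)

/-- `none`: `u` is `v` itself; `some true`: a neighbour of `v`; `some false`: neither. -/
def blockOf (u : V) : Fin P × Option Bool :=
  (part u, if u = v then none else some (decide (G.Adj v u)))

theorem card_filter_part_eq_sum_blockOf (p : Fin P) (r : V → Prop) [DecidablePred r] :
    #{u | part u = p ∧ r u} = ∑ o, #{u | blockOf G part v u = (p, o) ∧ r u} := by
  rw [card_eq_sum_card_fiberwise (f := fun u => (blockOf G part v u).2) (t := univ)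
    fun _ _ => mem_coe.mpr (mem_univ _)]
  refine sum_congr rfl fun o _ => ?_
  rw [filter_filter]
  refine congrArg card (filter_congr fun u _ => ?_)
  simp only [Prod.ext_iff, blockOf]
  tauto

theorem card_filter_blockOf_none (p : Fin P) (r : V → Prop) [DecidablePred r] :
    #{u | blockOf G part v u = (p, none) ∧ r u} = if part v = p ∧ r v then 1 else 0 := by
  have hblock : ({u | blockOf G part v u = (p, none) ∧ r u} : Finset V)
      = if part v = p ∧ r v then {v} else ∅ := by
    ext u
    by_cases hu : u = v
    · subst hu
      split_ifs <;> simp_all [blockOf]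
    · split_ifs <;> simp [blockOf, hu]
  rw [hblock]
  split_ifs <;> rfl

theorem filter_blockOf_some_true (p : Fin P) (r : V → Prop) [DecidablePred r] :
    ({u | blockOf G part v u = (p, some true) ∧ r u} : Finset V)
      = {u ∈ G.neighborFinset v | part u = p ∧ r u} := by
  ext u
  by_cases hu : u = v
  · subst hu
    simp [blockOf]
  · simp only [blockOf, Prod.mk.injEq, Option.ite_none_left_eq_some, Option.some.injEq,
      decide_eq_true_eq, mem_filter, mem_univ, hu, not_false_eq_true, true_and,
      SimpleGraph.mem_neighborFinset]
    tauto

theorem card_filter_blockOf_some_true (S : V → Fin M) (p : Fin P) (m : Fin M) :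
    #{u | blockOf G part v u = (p, some true) ∧ S u = m} = nbrCount G part S v p m := by
  rw [filter_blockOf_some_true, nbrCount]

/-- Integer-valued, so that a negative entry (no microstate fits) makes the count vanish
through `multinomZ` instead of being truncated. -/
def blockTarget (s : Fin M → Fin P → ℕ) (n : Fin P → Fin M → ℕ) (A : Fin M)
    (q : Fin P) : Fin P × Option Bool → Fin M → ℤ
  | (p, none) => fun m => if p = q ∧ m = A then 1 else 0
  | (p, some true) => fun m => n p m
  | (p, some false) => fun m => s m p - (if p = q ∧ m = A then 1 else 0) - n p m

theorem card_filter_part_eq_blockOf_add (S : V → Fin M) (p : Fin P) (m : Fin M) :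
    #{u | part u = p ∧ S u = m}
      = (if part v = p ∧ S v = m then 1 else 0) + nbrCount G part S v p m
        + #{u | blockOf G part v u = (p, some false) ∧ S u = m} := by
  rw [card_filter_part_eq_sum_blockOf G part v, Fintype.sum_option, Fintype.sum_bool,
    card_filter_blockOf_none, card_filter_blockOf_some_true, add_assoc]

theorem mem_filter_nbrCount_iff_blockTarget {s : Fin M → Fin P → ℕ} {A : Fin M} {q : Fin P}
    (hpv : part v = q) (n : Fin P → Fin M → ℕ) (S : V → Fin M) :
    S ∈ {S ∈ {S ∈ lumpCell part s | S v = A} | nbrCount G part S v = n}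
      ↔ ∀ i m, (#{u | blockOf G part v u = i ∧ S u = m} : ℤ) = blockTarget s n A q i m := by
  subst hpv
  simp only [mem_filter, mem_lumpCell, funext_iff, Prod.forall, Option.forall,
    Bool.forall_bool, card_filter_blockOf_none, card_filter_blockOf_some_true]
  constructor
  · rintro ⟨⟨hcell, rfl⟩, hn⟩ p
    refine ⟨fun m => ?_, fun m => ?_, fun m => ?_⟩
    · simp only [blockTarget, eq_comm (a := p), eq_comm (a := m)]
      push_cast
      rfl
    · have hsplit := card_filter_part_eq_blockOf_add G part v S p m
      rw [hcell, hn p m] at hsplit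
      simp only [blockTarget, eq_comm (a := p), eq_comm (a := m), hsplit]
      push_cast
      ring
    · simp only [blockTarget, hn p m]
  · intro h
    have hnbr (p m) : nbrCount G part S v p m = n p m := by
      simpa only [blockTarget, Nat.cast_inj] using (h p).2.2 m
    have hSv : S v = A := by
      have := (h (part v)).1 (S v)
      simp only [blockTarget, and_self, true_and, if_true] at this
      split_ifs at this with hA
      · exact hA
      · simp at this
    refine ⟨⟨fun m p => ?_, hSv⟩, hnbr⟩
    have hfalse := (h p).2.1 m
    zify
    rw [card_filter_part_eq_blockOf_add G part v, hnbr]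
    simp only [blockTarget] at hfalse
    push_cast
    rw [hfalse, hSv]
    simp only [eq_comm (a := part v), eq_comm (a := A)]
    ring

theorem prod_multinomZ_blockTarget_eq_Afun {s : Fin M → Fin P → ℕ} {A : Fin M} {q : Fin P}
    (hs : ∀ p, ∑ m, s m p = Ncell part p) (hpv : part v = q) (n : Fin P → Fin M → ℕ)
    (hn : ∀ p, ∑ m, n p m = dOf G part v p) (p : Fin P) :
    ∏ o, multinomZ #{u | blockOf G part v u = (p, o)} (blockTarget s n A q (p, o))
      = Afun (fun m => (s m p : ℤ) - if p = q ∧ m = A then 1 else 0)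
          (fun m => (n p m : ℤ)) := by
  have hnone : #{u | blockOf G part v u = (p, none)} = if p = q then 1 else 0 := by
    simpa [hpv, eq_comm] using card_filter_blockOf_none G part v p (fun _ => True)
  have htrue : #{u | blockOf G part v u = (p, some true)} = dOf G part v p := by
    simpa [dOf] using congrArg card (filter_blockOf_some_true G part v p (fun _ => True))
  have hcell : Ncell part p = ∑ o, #{u | blockOf G part v u = (p, o)} := by
    simpa [Ncell, cellVerts] using card_filter_part_eq_sum_blockOf G part v p (fun _ => True)
  rw [Fintype.sum_option, Fintype.sum_bool, hnone, htrue, ← hs p, ← hn p] at hcell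
  rw [Fintype.prod_option, Fintype.prod_bool, hnone]
  simp only [blockTarget]
  rw [Nat.cast_ite, Nat.cast_one, Nat.cast_zero, multinomZ_indicator, one_mul, Afun]
  congr 2
  · rw [htrue, ← hn p]
    push_cast
    rfl
  · have hδ :
        ∑ m : Fin M, (if p = q ∧ m = A then (1 : ℤ) else 0) = if p = q then 1 else 0 := by
      by_cases hpq : p = q <;> simp [hpq]
    have hcellℤ := congrArg (Nat.cast : ℕ → ℤ) hcell
    push_cast at hcellℤ
    rw [sum_sub_distrib, hδ]
    linarith

theorem card_filter_nbrCount_eq_prod_Afun {s : Fin M → Fin P → ℕ} {A : Fin M} {q : Fin P}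
    (hs : ∀ p, ∑ m, s m p = Ncell part p) (hpv : part v = q) (n : Fin P → Fin M → ℕ)
    (hn : ∀ p, ∑ m, n p m = dOf G part v p) :
    #{S ∈ {S ∈ lumpCell part s | S v = A} | nbrCount G part S v = n}
      = ∏ p, Afun (fun m => (s m p : ℤ) - if p = q ∧ m = A then 1 else 0)
          (fun m => (n p m : ℤ)) := by
  have hset : {S ∈ {S ∈ lumpCell part s | S v = A} | nbrCount G part S v = n}
      = ({S | ∀ i m, (#{u | blockOf G part v u = i ∧ S u = m} : ℤ)
          = blockTarget s n A q i m} : Finset (V → Fin M)) := by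
    ext S
    rw [mem_filter_nbrCount_iff_blockTarget G part v hpv, mem_filter,
      and_iff_right (mem_univ S)]
  rw [hset, card_filter_card_block_fiber_eq_prod, Fintype.prod_prod_type]
  exact prod_congr rfl fun p _ => prod_multinomZ_blockTarget_eq_Afun G part v hs hpv n hn p

end Blocks

theorem lumped_rate_as_neighbourhood_sum_general
    (V : Type) [Fintype V] [DecidableEq V]
    (G : SimpleGraph V) [DecidableRel G.Adj]
    (M P : ℕ)
    (part : V → Fin P)
    (ζ0 : Fin M → Fin M → ℝ) (ζ : Fin M → Fin M → Fin M → ℝ)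
    (s s' : Fin M → Fin P → ℕ)
    (hs : ∀ p, ∑ m, s m p = Ncell part p)
    (A B : Fin M) (q : Fin P) (hAB : A ≠ B)
    (hs' : ∀ m p, (s' m p : ℤ) =
      (s m p : ℤ) - (if m = A ∧ p = q then 1 else 0) + (if m = B ∧ p = q then 1 else 0)) :
    ∑ S ∈ lumpCell part s, ∑ S' ∈ lumpCell part s', Qmat G ζ0 ζ S S'
      = ∑ v ∈ cellVerts part q,
          ∑ n ∈ Fintype.piFinset (fun p : Fin P =>
              Finset.Nat.antidiagonalTuple M (dOf G part v p)),
            rate ζ0 ζ A B (fun m => ∑ p, n p m) *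
              (∏ p, (Afun
                (fun m => (s m p : ℤ) - (if p = q ∧ m = A then 1 else 0))
                (fun m => (n p m : ℤ)) : ℝ)) := by
  rw [sum_lumpCell_sum_lumpCell_Qmat G ζ0 ζ hs' hAB]
  refine sum_congr rfl fun v hv => ?_
  have hpv : part v = q := (mem_filter.mp hv).2
  rw [sum_rate_nbr_eq_sum_nbrCount G part]
  refine sum_congr rfl fun n hn => ?_
  have hn' (p) : ∑ m, n p m = dOf G part v p :=
    Nat.mem_antidiagonalTuple.mp (Fintype.mem_piFinset.mp hn p)
  rw [card_filter_nbrCount_eq_prod_Afun G part v hs hpv n hn', Nat.cast_prod]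

/-- **Lemma 5.4 of the paper.** If a transition from the macrostate `s` to the macrostate
`s'` corresponds to a vertex of cell `V_q` changing from vertex-state `A` to `B` (`A ≠ B`),
then `Σ_{S∈cell(s)} Σ_{S'∈cell(s')} Q_{S,S'}
  = Σ_{v∈V_q} Σ_{n | d^v} R_{A,B}(n 𝟙_P) ∏_p A(s_p − δ_{p,q} e_A, n_p)`,
where `n` ranges over neighbourhood counts of `v`: matrices with `Σ_m n_{m,p} = d^v_p`. -/
theorem lumped_rate_as_neighbourhood_sum
    (V : Type) [Fintype V] [DecidableEq V]
    (G : SimpleGraph V) [DecidableRel G.Adj]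
    (M P : ℕ) (hM : 1 ≤ M) (hP : 1 ≤ P)
    (part : V → Fin P) (hpart : ∀ p, ∃ v, part v = p)
    (ζ0 : Fin M → Fin M → ℝ) (ζ : Fin M → Fin M → Fin M → ℝ)
    (hζ0 : ∀ A B, 0 ≤ ζ0 A B) (hζ : ∀ A B m, 0 ≤ ζ A B m)
    (s s' : Fin M → Fin P → ℕ)
    (hs : ∀ p, ∑ m, s m p = Ncell part p)
    (A B : Fin M) (q : Fin P) (hAB : A ≠ B)
    (hs' : ∀ m p, (s' m p : ℤ) =
      (s m p : ℤ) - (if m = A ∧ p = q then 1 else 0) + (if m = B ∧ p = q then 1 else 0)) :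
    ∑ S ∈ lumpCell part s, ∑ S' ∈ lumpCell part s', Qmat G ζ0 ζ S S'
      = ∑ v ∈ cellVerts part q,
          ∑ n ∈ Fintype.piFinset (fun p : Fin P =>
              Finset.Nat.antidiagonalTuple M (dOf G part v p)),
            rate ζ0 ζ A B (fun m => ∑ p, n p m) *
              (∏ p, (Afun
                (fun m => (s m p : ℤ) - (if p = q ∧ m = A then 1 else 0))
                (fun m => (n p m : ℤ)) : ℝ)) :=
  lumped_rate_as_neighbourhood_sum_general V G M P part ζ0 ζ s s' hs A B q hAB hs'
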